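/- For a connected Feynman graph G and an edge subgraph γ ⊊ E_G, the restriction and contraction of s_G satisfy s_G|_γ = s_γ and s_G/_γ = s_{G/γ}, where γ carries the induced kinematics (the full kinematics of G if γ is mass-momentum spanning, trivial kinematics otherwise), and G/γ is the contraction of γ carrying the complementary kinematics. -/

import Mathlib

/-!
The contraction map `ℚ^V → ℚ^{V/γ}`, summing coordinates over each component of `γ`, sends
the incidence vector of an edge of `G` to its incidence vector in `G/γ`, and its kernel is
exactly the span of the incidence vectors of `γ`. Rank–nullity on the span of `γ ∪ η` gives
`r(γ ∪ η) = r(γ) + r_{G/γ}(η)`, hence `h¹(γ ∪ η) − h¹(γ) = h¹_{G/γ}(η)` for `η` disjoint from `γ`.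
The `δ^{mm}` terms match because being m.m. is upward closed, and because `γ ∪ η` connects two
vertices exactly when `η` connects their images in `G/γ`.
-/
open scoped Classical

/-- Signed incidence vector of an (oriented) edge `e`: head minus tail, in `ℚ^V`. -/
noncomputable def bd {V E : Type*} (ends : E → V × V) (e : E) : V → ℚ :=
  fun v => (if v = (ends e).1 then 1 else 0) - (if v = (ends e).2 then 1 else 0)

/-- Rank function of the graphic matroid of the graph. -/
noncomputable def grank {V E : Type*} [Fintype E] (ends : E → V × V) (γ : Finset E) : ℕ :=
  Module.finrank ℚ (Submodule.span ℚ (bd ends '' ↑γ))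

/-- First Betti number (cycle rank) of the edge subgraph on `γ`. -/
noncomputable def cycleRank {V E : Type*} [Fintype E] (ends : E → V × V)
    (γ : Finset E) : ℤ :=
  (γ.card : ℤ) - grank ends γ

/-- One step of adjacency through an edge of `γ`. -/
def step {V E : Type*} (ends : E → V × V) (γ : Finset E) (a b : V) : Prop :=
  ∃ e ∈ γ, ends e = (a, b) ∨ ends e = (b, a)

/-- `a` and `b` lie in the same connected component of the edge subgraph `γ`. -/
def reach {V E : Type*} (ends : E → V × V) (γ : Finset E) (a b : V) : Prop :=
  Relation.EqvGen (step ends γ) a b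

/-- `γ` is mass-momentum spanning: it contains all massive edges `EM` and all external
vertices `Vext` lie in a single connected component of the edge subgraph `γ`. -/
def mmSpanning {V E : Type*} (ends : E → V × V) (EM : Finset E) (Vext : Finset V)
    (γ : Finset E) : Prop :=
  EM ⊆ γ ∧ ∀ v ∈ Vext, ∀ w ∈ Vext, reach ends γ v w

/-- The set function `s_G(γ) = 2 h¹(γ) + δ^{mm}_γ` of a Feynman graph.  (A scaleless
graph, i.e. one with `EM = ∅` and `Vext = ∅`, is passed the empty kinematics and then
the `δ^{mm}` term is declared to vanish; this is handled at use sites.) -/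
noncomputable def sG {V E : Type*} [Fintype E] (ends : E → V × V) (EM : Finset E)
    (Vext : Finset V) (γ : Finset E) : ℤ :=
  2 * cycleRank ends γ + (if mmSpanning ends EM Vext γ then 1 else 0)

/-- The vertex type of the quotient graph `G/γ`: connected components of `γ` are
contracted to single vertices. -/
def QVert {V E : Type*} (ends : E → V × V) (γ : Finset E) : Type _ :=
  Quotient (Relation.EqvGen.setoid (step ends γ))

/-- The class of a vertex in the quotient graph `G/γ`. -/
def qmk {V E : Type*} (ends : E → V × V) (γ : Finset E) (v : V) : QVert ends γ :=
  Quotient.mk (Relation.EqvGen.setoid (step ends γ)) v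

/-- The endpoint map of the quotient graph `G/γ` (on the surviving edges `E \ γ`). -/
def qends {V E : Type*} (ends : E → V × V) (γ : Finset E) (e : E) :
    QVert ends γ × QVert ends γ :=
  (qmk ends γ (ends e).1, qmk ends γ (ends e).2)

theorem LinearMap.finrank_map_add_finrank_ker_of_ker_le {K M N : Type*} [Field K]
    [AddCommGroup M] [Module K M] [AddCommGroup N] [Module K N] [FiniteDimensional K M]
    (f : M →ₗ[K] N) {P : Submodule K M} (h : LinearMap.ker f ≤ P) :
    Module.finrank K (P.map f) + Module.finrank K (LinearMap.ker f) = Module.finrank K P := by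
  have hker : Module.finrank K (LinearMap.ker (f.domRestrict P)) =
      Module.finrank K (LinearMap.ker f) := by
    rw [LinearMap.ker_domRestrict]
    exact (Submodule.comapSubtypeEquivOfLe h).finrank_eq
  rw [← hker, ← LinearMap.range_domRestrict, LinearMap.finrank_range_add_finrank_ker]

section Contraction

variable {V E : Type*} {ends : E → V × V}

lemma bd_eq_single_sub_single (ends : E → V × V) (e : E) :
    bd ends e = Pi.single (ends e).1 1 - Pi.single (ends e).2 1 := by
  funext v
  simp [bd, Pi.single_apply]

lemma reach_mono {γ γ' : Finset E} (h : γ ⊆ γ') {v w : V} (hr : reach ends γ v w) :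
    reach ends γ' v w :=
  Relation.EqvGen.mono (fun _ _ ⟨e, he, hends⟩ => ⟨e, h he, hends⟩) v w hr

lemma mmSpanning_mono {EM : Finset E} {Vext : Finset V} {γ γ' : Finset E} (h : γ ⊆ γ')
    (hγ : mmSpanning ends EM Vext γ) : mmSpanning ends EM Vext γ' :=
  ⟨hγ.1.trans h, fun v hv w hw => reach_mono h (hγ.2 v hv w hw)⟩

lemma qmk_eq_qmk_iff {γ : Finset E} {v w : V} :
    qmk ends γ v = qmk ends γ w ↔ reach ends γ v w :=
  Quotient.eq

@[simp]
lemma qmk_out {γ : Finset E} (a : QVert ends γ) : qmk ends γ a.out = a :=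
  Quotient.out_eq a

lemma bd_qends_eq_zero {γ : Finset E} {e : E} (he : e ∈ γ) : bd (qends ends γ) e = 0 := by
  have hloop : qmk ends γ (ends e).1 = qmk ends γ (ends e).2 :=
    qmk_eq_qmk_iff.2 (.rel _ _ ⟨e, he, Or.inl rfl⟩)
  simp [bd_eq_single_sub_single, qends, hloop]

lemma reach_union_of_qmk_eq {γ η : Finset E} {v w : V} (h : qmk ends γ v = qmk ends γ w) :
    reach ends (γ ∪ η) v w :=
  reach_mono Finset.subset_union_left (qmk_eq_qmk_iff.1 h)

lemma eqvGen_qmk_of_reach_union {γ η : Finset E} {v w : V} (h : reach ends (γ ∪ η) v w) :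
    Relation.EqvGen (step (qends ends γ) η) (qmk ends γ v) (qmk ends γ w) := by
  induction h with
  | rel a b hab =>
    obtain ⟨e, he, hends⟩ := hab
    rcases Finset.mem_union.1 he with heγ | heη
    · rw [qmk_eq_qmk_iff.2 (.rel _ _ ⟨e, heγ, hends⟩)]
      exact .refl _
    · exact .rel _ _ ⟨e, heη, by rcases hends with h | h <;> simp [qends, h]⟩
  | refl a => exact .refl _
  | symm a b _ ih => exact .symm _ _ ih
  | trans a b c _ _ ih₁ ih₂ => exact .trans _ _ _ ih₁ ih₂

lemma reach_union_out_of_eqvGen {γ η : Finset E} {a b : QVert ends γ}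
    (h : Relation.EqvGen (step (qends ends γ) η) a b) :
    reach ends (γ ∪ η) a.out b.out := by
  induction h with
  | rel a b hab =>
    obtain ⟨e, he, hends⟩ := hab
    have hedge : reach ends (γ ∪ η) (ends e).1 (ends e).2 :=
      .rel _ _ ⟨e, Finset.mem_union_right _ he, Or.inl rfl⟩
    rcases hends with hends | hends <;> simp only [qends, Prod.ext_iff] at hends
    · exact .trans _ _ _ (reach_union_of_qmk_eq (by simp [hends.1]))
        (.trans _ _ _ hedge (reach_union_of_qmk_eq (by simp [hends.2])))
    · exact .trans _ _ _ (reach_union_of_qmk_eq (by simp [hends.2]))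
        (.trans _ _ _ (.symm _ _ hedge) (reach_union_of_qmk_eq (by simp [hends.1])))
  | refl a => exact .refl _
  | symm a b _ ih => exact .symm _ _ ih
  | trans a b c _ _ ih₁ ih₂ => exact .trans _ _ _ ih₁ ih₂

lemma reach_union_iff_eqvGen_qmk {γ η : Finset E} {v w : V} :
    reach ends (γ ∪ η) v w ↔
      Relation.EqvGen (step (qends ends γ) η) (qmk ends γ v) (qmk ends γ w) :=
  ⟨eqvGen_qmk_of_reach_union, fun h => .trans _ _ _ (reach_union_of_qmk_eq (qmk_out _).symm)
    (.trans _ _ _ (reach_union_out_of_eqvGen h) (reach_union_of_qmk_eq (qmk_out _)))⟩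

lemma mmSpanning_union_iff {EM : Finset E} {Vext : Finset V} {γ η : Finset E} :
    mmSpanning ends EM Vext (γ ∪ η) ↔ EM \ γ ⊆ η ∧ ∀ v ∈ Vext, ∀ w ∈ Vext,
      Relation.EqvGen (step (qends ends γ) η) (qmk ends γ v) (qmk ends γ w) := by
  simp only [mmSpanning, reach_union_iff_eqvGen_qmk]
  exact and_congr_left' sdiff_le_iff.symm

lemma single_sub_single_mem_span_of_reach {γ : Finset E} {v w : V} (h : reach ends γ v w) :
    Pi.single v 1 - Pi.single w 1 ∈ Submodule.span ℚ (bd ends '' ↑γ) := by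
  induction h with
  | rel a b hab =>
    obtain ⟨e, he, hends | hends⟩ := hab
    all_goals
      have hmem : bd ends e ∈ Submodule.span ℚ (bd ends '' ↑γ) :=
        Submodule.subset_span ⟨e, he, rfl⟩
    · simpa [bd_eq_single_sub_single, hends] using hmem
    · simpa [bd_eq_single_sub_single, hends] using Submodule.neg_mem _ hmem
  | refl a => simp
  | symm a b _ ih => simpa using Submodule.neg_mem _ ih
  | trans a b c _ _ ih₁ ih₂ => simpa using Submodule.add_mem _ ih₁ ih₂

variable [Fintype V]

noncomputable instance (γ : Finset E) : Fintype (QVert ends γ) :=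
  Quotient.fintype _

noncomputable def contractMap (ends : E → V × V) (γ : Finset E) :
    (V → ℚ) →ₗ[ℚ] (QVert ends γ → ℚ) :=
  Fintype.linearCombination ℚ fun v => Pi.single (qmk ends γ v) 1

lemma contractMap_single (γ : Finset E) (v : V) :
    contractMap ends γ (Pi.single v 1) = Pi.single (qmk ends γ v) 1 := by
  simp [contractMap]

lemma contractMap_comp_bd (γ : Finset E) :
    contractMap ends γ ∘ bd ends = bd (qends ends γ) := by
  funext e
  rw [Function.comp_apply, bd_eq_single_sub_single, bd_eq_single_sub_single, map_sub,
    contractMap_single, contractMap_single]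
  rfl

lemma ker_contractMap (γ : Finset E) :
    LinearMap.ker (contractMap ends γ) = Submodule.span ℚ (bd ends '' ↑γ) := by
  set W := Submodule.span ℚ (bd ends '' ↑γ)
  refine le_antisymm ?_ ?_
  · -- choosing a representative of each component gives a left inverse modulo `W`
    let lift : (QVert ends γ → ℚ) →ₗ[ℚ] (V → ℚ) ⧸ W :=
      Fintype.linearCombination ℚ fun c => W.mkQ (Pi.single c.out 1)
    have hlift : lift ∘ₗ contractMap ends γ = W.mkQ := by
      refine LinearMap.pi_ext' fun v => LinearMap.ext_ring ?_
      have hv : reach ends γ (qmk ends γ v).out v := qmk_eq_qmk_iff.1 (qmk_out _)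
      simpa [lift, contractMap_single, Submodule.Quotient.eq] using
        single_sub_single_mem_span_of_reach hv
    rw [← Submodule.ker_mkQ W, ← hlift]
    exact LinearMap.ker_le_ker_comp _ _
  · rw [Submodule.span_le]
    rintro _ ⟨e, he, rfl⟩
    exact (congrFun (contractMap_comp_bd γ) e).trans (bd_qends_eq_zero he)

lemma grank_union [Fintype E] (ends : E → V × V) (γ η : Finset E) :
    grank ends (γ ∪ η) =
      Module.finrank ℚ (Submodule.span ℚ (bd (qends ends γ) '' ↑η)) + grank ends γ := by
  have hmap : (Submodule.span ℚ (bd ends '' ↑(γ ∪ η))).map (contractMap ends γ) =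
      Submodule.span ℚ (bd (qends ends γ) '' ↑η) := by
    rw [Submodule.map_span, ← Set.image_comp, contractMap_comp_bd, Finset.coe_union,
      Set.image_union, Submodule.span_union,
      Submodule.span_eq_bot.2 (by rintro _ ⟨e, he, rfl⟩; exact bd_qends_eq_zero he), bot_sup_eq]
  have hker : LinearMap.ker (contractMap ends γ) ≤ Submodule.span ℚ (bd ends '' ↑(γ ∪ η)) := by
    rw [ker_contractMap]
    exact Submodule.span_mono (Set.image_mono (by simp))
  have hrank := LinearMap.finrank_map_add_finrank_ker_of_ker_le _ hker
  rw [hmap, ker_contractMap] at hrank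
  exact hrank.symm

lemma cycleRank_union [Fintype E] {γ η : Finset E} (h : Disjoint γ η) :
    cycleRank ends (γ ∪ η) = cycleRank ends γ +
      ((η.card : ℤ) - Module.finrank ℚ (Submodule.span ℚ (bd (qends ends γ) '' ↑η))) := by
  rw [cycleRank, cycleRank, Finset.card_union_of_disjoint h, grank_union]
  push_cast
  ring

end Contraction

theorem sG_restriction_contraction_general {V E : Type*} [Fintype V] [Fintype E]
    (ends : E → V × V) (EM : Finset E) (Vext : Finset V)
    (γ : Finset E) :
    (∀ η : Finset E, η ⊆ γ →
      sG ends EM Vext η =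
        2 * cycleRank ends η +
          (if mmSpanning ends EM Vext γ ∧ mmSpanning ends EM Vext η then 1 else 0)) ∧
    (∀ η : Finset E, η ⊆ Finset.univ \ γ →
      sG ends EM Vext (γ ∪ η) - sG ends EM Vext γ =
        2 * ((η.card : ℤ) -
            Module.finrank ℚ (Submodule.span ℚ (bd (qends ends γ) '' ↑η))) +
          (if ¬ mmSpanning ends EM Vext γ ∧
              ((EM \ γ ⊆ η) ∧ ∀ v ∈ Vext, ∀ w ∈ Vext,
                Relation.EqvGen (step (qends ends γ) η) (qmk ends γ v) (qmk ends γ w))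
            then 1 else 0)) := by
  refine ⟨fun η hη => ?_, fun η hη => ?_⟩
  · simp only [sG, and_iff_right_of_imp (mmSpanning_mono hη)]
  · have hdisj : Disjoint γ η := Finset.disjoint_of_subset_right hη Finset.disjoint_sdiff
    simp only [sG, ← mmSpanning_union_iff, cycleRank_union hdisj]
    by_cases hγ : mmSpanning ends EM Vext γ
    · simp only [hγ, mmSpanning_mono Finset.subset_union_left hγ, if_true, not_true_eq_false,
        false_and, if_false]
      ring
    · simp only [hγ, if_false, not_false_eq_true, true_and]
      ring

/-- For a connected Feynman graph `G` and an edge subgraph `γ ⊊ E_G`, the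
restriction and contraction of `s_G` satisfy `s_G|_γ = s_γ` and `s_G/_γ = s_{G/γ}`.
Here `γ` carries the induced kinematics: the full kinematics `(EM, Vext)` of `G` if `γ` is
mass-momentum spanning, and trivial (scaleless) kinematics otherwise, so that
`s_γ(η) = 2h¹(η) + δ`, with `δ = 1` iff `γ` is m.m. and `η` is m.m.; and the quotient
`G/γ` carries the complementary kinematics: scaleless if `γ` is m.m. (so no subgraph of
`G/γ` counts as m.m.), and the inherited kinematics (massive edges `EM \ γ`, external
vertices the images of `Vext`) otherwise. -/
theorem sG_restriction_contraction {V E : Type*} [Fintype V] [Fintype E]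
    (ends : E → V × V) (EM : Finset E) (Vext : Finset V)
    (hconn : ∀ v w : V, reach ends Finset.univ v w)
    (γ : Finset E) (hγ : γ ⊂ Finset.univ) :
    (∀ η : Finset E, η ⊆ γ →
      sG ends EM Vext η =
        2 * cycleRank ends η +
          (if mmSpanning ends EM Vext γ ∧ mmSpanning ends EM Vext η then 1 else 0)) ∧
    (∀ η : Finset E, η ⊆ Finset.univ \ γ →
      sG ends EM Vext (γ ∪ η) - sG ends EM Vext γ =
        2 * ((η.card : ℤ) -
            Module.finrank ℚ (Submodule.span ℚ (bd (qends ends γ) '' ↑η))) +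
          (if ¬ mmSpanning ends EM Vext γ ∧
              ((EM \ γ ⊆ η) ∧ ∀ v ∈ Vext, ∀ w ∈ Vext,
                Relation.EqvGen (step (qends ends γ) η) (qmk ends γ v) (qmk ends γ w))
            then 1 else 0)) :=
  sG_restriction_contraction_general ends EM Vext γ
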